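/- Degree centrality violates Self-consistency: there exists a connected graph with vertices u, v and a bijection from N_u to N_v that is pointwise ≤ in degree with at least one strict inequality, but deg(u) = deg(v). -/

import Mathlib

/-!
Degree centrality only sees the number of neighbours, not how central they are. In the tree
with edges `01, 12, 23, 24` the leaves `0` and `4` both have degree `1`, but the unique
neighbour of `0` has degree `2` while that of `4` has degree `3`.
-/

open SimpleGraph

section LeafNeighbors

variable {V : Type*} (G : SimpleGraph V) {u v a b : V}

def leafNeighborEquiv (hu : ∀ x, G.Adj u x ↔ x = a) (hv : ∀ x, G.Adj v x ↔ x = b) :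
    {w // G.Adj u w} ≃ {w // G.Adj v w} where
  toFun _ := ⟨b, (hv b).2 rfl⟩
  invFun _ := ⟨a, (hu a).2 rfl⟩
  left_inv w := Subtype.ext ((hu w.1).1 w.2).symm
  right_inv w := Subtype.ext ((hv w.1).1 w.2).symm

lemma natCard_setOf_adj_eq_degree (w : V) [Fintype (G.neighborSet w)] :
    Nat.card {x | G.Adj w x} = G.degree w := by
  rw [← card_neighborSet_eq_degree, ← Nat.card_eq_fintype_card]
  rfl

lemma natCard_setOf_adj_eq_one_of_adj_iff_eq (hu : ∀ x, G.Adj u x ↔ x = a) :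
    Nat.card {x | G.Adj u x} = 1 := by
  rw [show {x | G.Adj u x} = {a} from Set.ext hu, Nat.card_unique]

theorem exists_degree_monotone_equiv_of_leaves (hu : ∀ x, G.Adj u x ↔ x = a)
    (hv : ∀ x, G.Adj v x ↔ x = b)
    (hab : Nat.card {x | G.Adj a x} < Nat.card {x | G.Adj b x}) :
    ∃ φ : {w // G.Adj u w} ≃ {w // G.Adj v w},
      (∀ w : {w // G.Adj u w},
        Nat.card {x | G.Adj w.1 x} ≤ Nat.card {x | G.Adj (φ w).1 x}) ∧
      (∃ w : {w // G.Adj u w},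
        Nat.card {x | G.Adj w.1 x} < Nat.card {x | G.Adj (φ w).1 x}) ∧
      Nat.card {x | G.Adj u x} = Nat.card {x | G.Adj v x} := by
  have hlt (w : {w // G.Adj u w}) :
      Nat.card {x | G.Adj w.1 x} < Nat.card {x | G.Adj (leafNeighborEquiv G hu hv w).1 x} := by
    rwa [(hu w.1).1 w.2]
  refine ⟨leafNeighborEquiv G hu hv, fun w => (hlt w).le, ⟨⟨a, (hu a).2 rfl⟩, hlt _⟩, ?_⟩
  rw [natCard_setOf_adj_eq_one_of_adj_iff_eq G hu, natCard_setOf_adj_eq_one_of_adj_iff_eq G hv]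

end LeafNeighbors

def spider : SimpleGraph (Fin 5) :=
  fromEdgeSet ↑({s(0, 1), s(1, 2), s(2, 3), s(2, 4)} : Finset (Sym2 (Fin 5)))

instance : DecidableRel spider.Adj := inferInstanceAs (DecidableRel (fromEdgeSet _).Adj)

/-- Degree centrality violates Self-consistency: there is a finite connected graph with
vertices `u, v` and a bijection from `N_u` to `N_v` that is pointwise `≤` in degree with
at least one strict inequality, but `deg(u) = deg(v)`. -/
theorem degree_violates_self_consistency :
    ∃ (n : ℕ) (G : SimpleGraph (Fin n)) (u v : Fin n),
      G.Connected ∧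
      ∃ φ : {w // G.Adj u w} ≃ {w // G.Adj v w},
        (∀ w : {w // G.Adj u w},
          Nat.card {x | G.Adj w.1 x} ≤ Nat.card {x | G.Adj (φ w).1 x}) ∧
        (∃ w : {w // G.Adj u w},
          Nat.card {x | G.Adj w.1 x} < Nat.card {x | G.Adj (φ w).1 x}) ∧
        Nat.card {x | G.Adj u x} = Nat.card {x | G.Adj v x} := by
  have h0 : ∀ x, spider.Adj 0 x ↔ x = 1 := by decide
  have h4 : ∀ x, spider.Adj 4 x ↔ x = 2 := by decide
  have hdeg : Nat.card {x | spider.Adj 1 x} < Nat.card {x | spider.Adj 2 x} := by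
    rw [natCard_setOf_adj_eq_degree, natCard_setOf_adj_eq_degree]
    decide
  exact ⟨5, spider, 0, 4, by decide, exists_degree_monotone_equiv_of_leaves spider h0 h4 hdeg⟩
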